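/- Under the assumptions of the regret lemma with SAM perturbations v_t = r·∇f(w_t)/‖∇f(w_t)‖ (and v_t = 0 when ∇f(w_t) = 0), the averaged iterate ŵ = (1/T)Σ w_t satisfies f(ŵ) ≤ ‖w_1 − w*‖²/(ηT) + 4β·max(r − ρ, 0)². -/

import Mathlib

/-!
Fix a step `t`, write `z = w_t + v_t` and `δ = max (r - ρ) 0`, and let `u` be the point of the
`ρ`-ball closest to `v_t`, so that `‖v_t - u‖ ≤ δ` and `f (w* + u) = 0`. The first-order
convexity inequality at `z` against `w* + u` gives `⟪∇f z, w_t - w*⟫ ≥ f z - δ ‖∇f z‖`, and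
smoothness together with `f ≥ 0` gives `‖∇f z‖² ≤ 2β f z`; the latter absorbs both the
quadratic term of the update (as `η ≤ 1/(4β)`) and, by AM-GM, the term `δ ‖∇f z‖`. Since the
ascent direction is a positive multiple of `∇f (w_t)`, convexity also gives `f (w_t) ≤ f z`, so
`η f (w_t) ≤ ‖w_t - w*‖² - ‖w_{t+1} - w*‖² + 4ηβδ²`. Summing telescopes, and Jensen's inequality
bounds `f` at the average.
-/

open RealInnerProductSpace

section Gradient

variable {E : Type*} [NormedAddCommGroup E] [InnerProductSpace ℝ E] [CompleteSpace E]
  {f : E → ℝ}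

theorem hasDerivAt_comp_add_smul {x u : E} {s : ℝ} (hf : DifferentiableAt ℝ f (x + s • u)) :
    HasDerivAt (fun t : ℝ => f (x + t • u)) ⟪gradient f (x + s • u), u⟫ s := by
  have hline : HasDerivAt (fun t : ℝ => x + t • u) u s := by
    simpa using ((hasDerivAt_id s).smul_const u).const_add x
  simpa [Function.comp_def, inner_gradient_left] using
    hf.hasFDerivAt.comp_hasDerivAt s hline

theorem ConvexOn.add_inner_gradient_le (hconv : ConvexOn ℝ Set.univ f) {x : E}
    (hf : DifferentiableAt ℝ f x) (y : E) : f x + ⟪gradient f x, y - x⟫ ≤ f y := by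
  have hline : ConvexOn ℝ Set.univ fun t : ℝ => f (x + t • (y - x)) := by
    simpa [Function.comp_def, AffineMap.lineMap_apply, add_comm] using
      hconv.comp_affineMap (AffineMap.lineMap x y)
  have hderiv := hasDerivAt_comp_add_smul (x := x) (u := y - x) (s := 0) (by simpa using hf)
  have := hline.le_slope_of_hasDerivAt (Set.mem_univ 0) (Set.mem_univ 1) one_pos hderiv
  simp only [slope_def_field, zero_smul, add_zero, one_smul, add_sub_cancel, sub_zero,
    div_one] at this
  linarith

variable {β : ℝ}

theorem le_add_inner_gradient_add_sq (hf : Differentiable ℝ f)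
    (hsmooth : ∀ x y, ‖gradient f x - gradient f y‖ ≤ β * ‖x - y‖) (x y : E) :
    f y ≤ f x + ⟪gradient f x, y - x⟫ + β / 2 * ‖y - x‖ ^ 2 := by
  set u := y - x
  have hbound : ∀ t ∈ Set.Ico (0 : ℝ) 1,
      ⟪gradient f (x + t • u), u⟫ ≤ ⟪gradient f x, u⟫ + β * t * ‖u‖ ^ 2 := by
    intro t ht
    have hlip : ‖gradient f (x + t • u) - gradient f x‖ ≤ β * (t * ‖u‖) := by
      simpa [norm_smul, abs_of_nonneg ht.1] using hsmooth (x + t • u) x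
    have := real_inner_le_norm (gradient f (x + t • u) - gradient f x) u
    rw [inner_sub_left] at this
    nlinarith [mul_le_mul_of_nonneg_right hlip (norm_nonneg u)]
  have key := image_le_of_deriv_right_le_deriv_boundary
    (f := fun t : ℝ => f (x + t • u))
    (B := fun t => f x + t * ⟪gradient f x, u⟫ + β / 2 * t ^ 2 * ‖u‖ ^ 2)
    (hf.continuous.comp (by fun_prop)).continuousOn
    (fun t _ => (hasDerivAt_comp_add_smul (hf _)).hasDerivWithinAt)
    (by simp) (by fun_prop)
    (fun t _ => by
      have := (((hasDerivAt_id t).mul_const ⟪gradient f x, u⟫).const_add (f x)).add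
        (((hasDerivAt_pow 2 t).const_mul (β / 2)).mul_const (‖u‖ ^ 2))
      exact this.hasDerivWithinAt)
    (fun t ht => by simp only [one_mul]; push_cast; nlinarith [hbound t ht])
    (Set.right_mem_Icc.mpr zero_le_one)
  simpa [u] using key

theorem sq_norm_gradient_le (hβ : 0 < β) (hnonneg : ∀ x, 0 ≤ f x) (hf : Differentiable ℝ f)
    (hsmooth : ∀ x y, ‖gradient f x - gradient f y‖ ≤ β * ‖x - y‖) (x : E) :
    ‖gradient f x‖ ^ 2 ≤ 2 * β * f x := by
  have h := le_add_inner_gradient_add_sq hf hsmooth x (x - β⁻¹ • gradient f x)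
  rw [sub_sub_cancel_left, inner_neg_right, real_inner_smul_right, real_inner_self_eq_norm_sq,
    norm_neg, norm_smul, Real.norm_eq_abs, abs_inv, abs_of_pos hβ] at h
  have hmin := (hnonneg _).trans h
  field_simp at hmin
  linarith

end Gradient

section Perturbation

variable {E : Type*} [NormedAddCommGroup E] [InnerProductSpace ℝ E]

theorem norm_div_norm_smul_le {r : ℝ} (hr : 0 ≤ r) (g : E) : ‖(r / ‖g‖) • g‖ ≤ r := by
  rcases eq_or_ne g 0 with rfl | hg
  · simpa using hr
  · rw [norm_smul, Real.norm_eq_abs, abs_div, abs_norm, abs_of_nonneg hr,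
      div_mul_cancel₀ _ (norm_ne_zero_iff.mpr hg)]

theorem inner_div_norm_smul_self (r : ℝ) (g : E) : ⟪g, (r / ‖g‖) • g⟫ = r * ‖g‖ := by
  rcases eq_or_ne g 0 with rfl | hg
  · simp
  · rw [real_inner_smul_right, real_inner_self_eq_norm_sq]
    field_simp

theorem exists_norm_le_norm_sub_le {ρ : ℝ} (hρ : 0 ≤ ρ) (v : E) :
    ∃ u, ‖u‖ ≤ ρ ∧ ‖v - u‖ ≤ max (‖v‖ - ρ) 0 := by
  rcases le_or_gt ‖v‖ ρ with hv | hv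
  · exact ⟨v, hv, by simp⟩
  · have hv0 : ‖v‖ ≠ 0 := (hρ.trans_lt hv).ne'
    refine ⟨(ρ / ‖v‖) • v, norm_div_norm_smul_le hρ v, le_max_of_le_left ?_⟩
    have hcoef : 0 ≤ 1 - ρ / ‖v‖ := sub_nonneg.mpr ((div_le_one₀ (hρ.trans_lt hv)).mpr hv.le)
    rw [show v - (ρ / ‖v‖) • v = (1 - ρ / ‖v‖) • v by rw [sub_smul, one_smul], norm_smul,
      Real.norm_eq_abs, abs_of_nonneg hcoef, sub_mul,
      div_mul_cancel₀ _ hv0, one_mul]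

end Perturbation

section Averaging

variable {E : Type*} [AddCommGroup E] [Module ℝ E] {f : E → ℝ}

theorem ConvexOn.map_average_le_of_telescoping (hconv : ConvexOn ℝ Set.univ f)
    {w : ℕ → E} {D : ℕ → ℝ} {η c : ℝ} (hη : 0 < η) (hD : ∀ t, 0 ≤ D t)
    (hstep : ∀ t, η * f (w t) ≤ D t - D (t + 1) + η * c) {T : ℕ} (hT : 1 ≤ T) :
    f ((T : ℝ)⁻¹ • ∑ t ∈ Finset.Icc 1 T, w t) ≤ D 1 / (η * T) + c := by
  have hsum : η * ∑ t ∈ Finset.Icc 1 T, f (w t) ≤ D 1 + T * (η * c) :=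
    calc η * ∑ t ∈ Finset.Icc 1 T, f (w t)
        ≤ ∑ t ∈ Finset.Icc 1 T, (D t - D (t + 1) + η * c) := by
          rw [Finset.mul_sum]; exact Finset.sum_le_sum fun t _ => hstep t
      _ = D 1 - D (T + 1) + T * (η * c) := by
          have htel : ∑ t ∈ Finset.Icc 1 T, (D t - D (t + 1)) = D 1 - D (T + 1) := by
            simpa using congrArg Neg.neg (Finset.sum_Icc_sub hT D)
          rw [Finset.sum_add_distrib, htel, Finset.sum_const, Nat.card_Icc, nsmul_eq_mul,
            Nat.add_sub_cancel]
      _ ≤ D 1 + T * (η * c) := by linarith [hD (T + 1)]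
  have hTpos : (0 : ℝ) < T := by exact_mod_cast hT
  have hjensen : f ((T : ℝ)⁻¹ • ∑ t ∈ Finset.Icc 1 T, w t)
      ≤ (T : ℝ)⁻¹ * ∑ t ∈ Finset.Icc 1 T, f (w t) := by
    simpa [Finset.smul_sum, Finset.mul_sum] using
      hconv.map_sum_le (t := Finset.Icc 1 T) (w := fun _ => (T : ℝ)⁻¹) (p := w)
        (fun _ _ => by positivity) (by simp [hTpos.ne']) (fun _ _ => Set.mem_univ _)
  calc f ((T : ℝ)⁻¹ • ∑ t ∈ Finset.Icc 1 T, w t)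
      ≤ (T : ℝ)⁻¹ * ∑ t ∈ Finset.Icc 1 T, f (w t) := hjensen
    _ ≤ D 1 / (η * T) + c := by
      rw [inv_mul_le_iff₀ hTpos,
        show (T : ℝ) * (D 1 / (η * T) + c) = (D 1 + T * (η * c)) / η by field_simp,
        le_div_iff₀' hη]
      exact hsum

end Averaging

section Step

variable {E : Type*} [NormedAddCommGroup E] [InnerProductSpace ℝ E] [CompleteSpace E]
  {f : E → ℝ} {β η δ : ℝ}

theorem sam_step_regret_le (hβ : 0 < β) (hη : 0 < η) (hηβ : η ≤ 1 / (4 * β))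
    (hnonneg : ∀ x, 0 ≤ f x) (hconv : ConvexOn ℝ Set.univ f) (hf : Differentiable ℝ f)
    (hsmooth : ∀ x y, ‖gradient f x - gradient f y‖ ≤ β * ‖x - y‖)
    {x v u wstar : E} (hascent : f x ≤ f (x + v)) (hu : f (wstar + u) = 0)
    (hvu : ‖v - u‖ ≤ δ) :
    η * f x ≤
      ‖x - wstar‖ ^ 2 - ‖x - η • gradient f (x + v) - wstar‖ ^ 2 + 4 * η * β * δ ^ 2 := by
  set g := gradient f (x + v)
  have hcorr : f (x + v) - ‖g‖ * δ ≤ ⟪g, x - wstar⟫ := by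
    have hfirst := hconv.add_inner_gradient_le (hf (x + v)) (wstar + u)
    have hcs := real_inner_le_norm g (v - u)
    have : x - wstar = (x + v) - (wstar + u) - (v - u) := by abel
    rw [hu, ← neg_sub, inner_neg_right] at hfirst
    rw [this, inner_sub_right]
    nlinarith [mul_le_mul_of_nonneg_left hvu (norm_nonneg g)]
  have hexpand : ‖x - η • g - wstar‖ ^ 2
      = ‖x - wstar‖ ^ 2 - 2 * η * ⟪g, x - wstar⟫ + η ^ 2 * ‖g‖ ^ 2 := by
    rw [sub_right_comm, norm_sub_sq_real, real_inner_smul_right, real_inner_comm, norm_smul,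
      Real.norm_eq_abs, abs_of_pos hη]
    ring
  have hgrad := sq_norm_gradient_le hβ hnonneg hf hsmooth (x + v)
  have h4βη : 4 * β * η ≤ 1 := by rwa [le_div_iff₀ (by positivity), mul_comm] at hηβ
  have hsq : η * ‖g‖ ^ 2 ≤ f (x + v) / 2 := by
    nlinarith [hnonneg (x + v)]
  -- AM-GM in the form `2 ‖g‖ δ ≤ ‖g‖² / (4β) + 4βδ²`
  have hamgm : 2 * (‖g‖ * δ) ≤ f (x + v) / 2 + 4 * β * δ ^ 2 := by
    nlinarith [sq_nonneg (‖g‖ - 4 * β * δ)]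
  rw [hexpand]
  nlinarith [mul_le_mul_of_nonneg_left hcorr hη.le, mul_le_mul_of_nonneg_left hsq hη.le,
    mul_le_mul_of_nonneg_left hamgm hη.le, mul_le_mul_of_nonneg_left hascent hη.le]

end Step

/-- SAM: under the regret-lemma assumptions, with normalized-ascent perturbations
`v_t = r∇f(w_t)/‖∇f(w_t)‖` (and `v_t = 0` when the gradient vanishes), the averaged
iterate `ŵ = (1/T)Σ w_t` satisfies `f(ŵ) ≤ ‖w₁ - w*‖²/(ηT) + 4β·max(r-ρ,0)²`. -/
theorem stmt_11 (d : ℕ) (β ρ r η : ℝ) (hβ : 0 < β) (hρ : 0 ≤ ρ) (hr : 0 ≤ r)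
    (hη : 0 < η) (hη' : η ≤ 1 / (4 * β))
    (f : EuclideanSpace ℝ (Fin d) → ℝ)
    (hnonneg : ∀ w, 0 ≤ f w) (hconv : ConvexOn ℝ Set.univ f) (hdiff : Differentiable ℝ f)
    (hsmooth : ∀ x y, ‖gradient f x - gradient f y‖ ≤ β * ‖x - y‖)
    (wstar : EuclideanSpace ℝ (Fin d)) (hflat : ∀ u, ‖u‖ ≤ ρ → f (wstar + u) = 0)
    (T : ℕ) (hT : 1 ≤ T) (w v : ℕ → EuclideanSpace ℝ (Fin d))
    (hv0 : ∀ t, gradient f (w t) = 0 → v t = 0)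
    (hv : ∀ t, gradient f (w t) ≠ 0 →
      v t = (r / ‖gradient f (w t)‖) • gradient f (w t))
    (hupd : ∀ t, w (t + 1) = w t - η • gradient f (w t + v t)) :
    f ((T : ℝ)⁻¹ • ∑ t ∈ Finset.Icc 1 T, w t)
      ≤ ‖w 1 - wstar‖ ^ 2 / (η * T) + 4 * β * max (r - ρ) 0 ^ 2 := by
  have hvt : ∀ t, v t = (r / ‖gradient f (w t)‖) • gradient f (w t) := fun t => by
    by_cases hg : gradient f (w t) = 0
    · simp [hv0 t hg, hg]
    · exact hv t hg
  refine hconv.map_average_le_of_telescoping hη (fun t => sq_nonneg ‖w t - wstar‖)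
    (fun t => ?_) hT
  obtain ⟨u, hu, hvu⟩ := exists_norm_le_norm_sub_le hρ (v t)
  have hascent : f (w t) ≤ f (w t + v t) := by
    have := hconv.add_inner_gradient_le (hdiff (w t)) (w t + v t)
    rw [add_sub_cancel_left, hvt t, inner_div_norm_smul_self] at this
    rw [hvt t]
    nlinarith [mul_nonneg hr (norm_nonneg (gradient f (w t)))]
  have hvr : ‖v t‖ ≤ r := hvt t ▸ norm_div_norm_smul_le hr _
  have hvu' : ‖v t - u‖ ≤ max (r - ρ) 0 :=
    hvu.trans (max_le_max_right _ (by linarith))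
  have := sam_step_regret_le hβ hη hη' hnonneg hconv hdiff hsmooth hascent (hflat u hu) hvu'
  rw [← hupd t] at this
  linarith
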